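/- Let σ : ℝ → ℝ be Lipschitz with Lipschitz constant Lip_σ, and let the forcing satisfy C_ξ := sup_{n≥0} sup_{x∈ℤ^d} |ξ_n(x)| < ∞ together with p(0) ≥ C_ξ·Lip_σ, and σ(0) = 0. If u_0(x) ≥ 0 for all x ∈ ℤ^d, then the solution u of the discrete heat equation u_{n+1}(x) = (𝒫u_n)(x) + σ(u_n(x))ξ_n(x) satisfies u_n(x) ≥ 0 for all n ≥ 0 and x ∈ ℤ^d. -/

import Mathlib

open Filter Real

noncomputable section

/-- Transition operator of the random walk on `ℤ^d` with step distribution `p`. -/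
def transOp {d : ℕ} (p : (Fin d → ℤ) → ℝ) (h : (Fin d → ℤ) → ℝ) (x : Fin d → ℤ) : ℝ :=
  ∑' y : Fin d → ℤ, p (y - x) * h y

/-!
The operator `𝒫` is a positive average: it maps functions bounded by `B` to functions bounded
by `B`, so every `u n` is bounded and `𝒫 (u n)` is a genuinely convergent sum. For `u n ≥ 0`
its diagonal term alone gives `𝒫 (u n) x ≥ p 0 · u n x`, while `σ 0 = 0` and the Lipschitz
bound give `|σ (u n x) ξ n x| ≤ C_ξ Lip_σ · u n x ≤ p 0 · u n x`; hence `u (n + 1) x ≥ 0`.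
-/

section TransOp

variable {d : ℕ} {p h : (Fin d → ℤ) → ℝ} {B : ℝ}

lemma hasSum_transOp_kernel (hp_sum : ∑' x : Fin d → ℤ, p x = 1) (x : Fin d → ℤ) :
    HasSum (fun y => p (y - x)) 1 := by
  have hp : Summable p := by
    by_contra hns
    simp [tsum_eq_zero_of_not_summable hns] at hp_sum
  rw [← hp_sum]
  exact (Equiv.subRight x).hasSum_iff.mpr hp.hasSum

lemma abs_transOp_le (hp_nonneg : ∀ x, 0 ≤ p x) (hp_sum : ∑' x : Fin d → ℤ, p x = 1)
    (hB : ∀ y, |h y| ≤ B) (x : Fin d → ℤ) : |transOp p h x| ≤ B := by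
  have hsum : HasSum (fun y => p (y - x) * B) B := by
    simpa using (hasSum_transOp_kernel hp_sum x).mul_right B
  refine tsum_of_norm_bounded (f := fun y => p (y - x) * h y) hsum fun y => ?_
  rw [Real.norm_eq_abs, abs_mul, abs_of_nonneg (hp_nonneg _)]
  exact mul_le_mul_of_nonneg_left (hB y) (hp_nonneg _)

lemma mul_le_transOp (hp_nonneg : ∀ x, 0 ≤ p x) (hp_sum : ∑' x : Fin d → ℤ, p x = 1)
    (hB : ∀ y, |h y| ≤ B) (hh : ∀ y, 0 ≤ h y) (x : Fin d → ℤ) : p 0 * h x ≤ transOp p h x := by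
  have hsum : Summable fun y => p (y - x) * h y := by
    refine .of_norm_bounded ((hasSum_transOp_kernel hp_sum x).summable.mul_right B) fun y => ?_
    rw [Real.norm_eq_abs, abs_mul, abs_of_nonneg (hp_nonneg _)]
    exact mul_le_mul_of_nonneg_left (hB y) (hp_nonneg _)
  simpa [transOp] using hsum.le_tsum x fun y _ => mul_nonneg (hp_nonneg _) (hh y)

end TransOp

section Lipschitz

variable {σ : ℝ → ℝ} {L : ℝ}

lemma nonneg_of_abs_sub_le_mul (hLip : ∀ x y : ℝ, |σ x - σ y| ≤ L * |x - y|) : 0 ≤ L := by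
  simpa using (abs_nonneg _).trans (hLip 1 0)

lemma abs_le_mul_abs_of_map_zero (hLip : ∀ x y : ℝ, |σ x - σ y| ≤ L * |x - y|) (hσ0 : σ 0 = 0)
    (t : ℝ) : |σ t| ≤ L * |t| := by
  simpa [hσ0] using hLip t 0

end Lipschitz

section HeatStep

variable {d : ℕ} {p h ξ : (Fin d → ℤ) → ℝ} {σ : ℝ → ℝ} {L C B : ℝ}

lemma abs_heatStep_le (hp_nonneg : ∀ x, 0 ≤ p x) (hp_sum : ∑' x : Fin d → ℤ, p x = 1)
    (hLip : ∀ x y : ℝ, |σ x - σ y| ≤ L * |x - y|) (hσ0 : σ 0 = 0) (hξ : ∀ x, |ξ x| ≤ C)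
    (hB : ∀ y, |h y| ≤ B) (x : Fin d → ℤ) :
    |transOp p h x + σ (h x) * ξ x| ≤ B + L * B * C := by
  have hσ : |σ (h x)| ≤ L * B :=
    (abs_le_mul_abs_of_map_zero hLip hσ0 _).trans
      (mul_le_mul_of_nonneg_left (hB x) (nonneg_of_abs_sub_le_mul hLip))
  calc |transOp p h x + σ (h x) * ξ x|
      ≤ |transOp p h x| + |σ (h x)| * |ξ x| := by rw [← abs_mul]; exact abs_add_le _ _
    _ ≤ B + L * B * C := by
      gcongr
      · exact abs_transOp_le hp_nonneg hp_sum hB x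
      · exact (abs_nonneg _).trans hσ
      · exact hξ x

lemma heatStep_nonneg (hp_nonneg : ∀ x, 0 ≤ p x) (hp_sum : ∑' x : Fin d → ℤ, p x = 1)
    (hLip : ∀ x y : ℝ, |σ x - σ y| ≤ L * |x - y|) (hσ0 : σ 0 = 0) (hξ : ∀ x, |ξ x| ≤ C)
    (hcomp : C * L ≤ p 0) (hB : ∀ y, |h y| ≤ B) (hh : ∀ y, 0 ≤ h y) (x : Fin d → ℤ) :
    0 ≤ transOp p h x + σ (h x) * ξ x := by
  have hσ : |σ (h x)| ≤ L * h x := by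
    simpa [abs_of_nonneg (hh x)] using abs_le_mul_abs_of_map_zero hLip hσ0 (h x)
  have hforce : |σ (h x) * ξ x| ≤ p 0 * h x :=
    calc |σ (h x) * ξ x| = |σ (h x)| * |ξ x| := abs_mul _ _
      _ ≤ L * h x * C := mul_le_mul hσ (hξ x) (abs_nonneg _) ((abs_nonneg _).trans hσ)
      _ = C * L * h x := by ring
      _ ≤ p 0 * h x := mul_le_mul_of_nonneg_right hcomp (hh x)
  linarith [mul_le_transOp hp_nonneg hp_sum hB hh x, neg_abs_le (σ (h x) * ξ x)]

end HeatStep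

theorem discrete_heat_positivity_general
    {d : ℕ}
    (p : (Fin d → ℤ) → ℝ) (hp_nonneg : ∀ x, 0 ≤ p x)
    (hp_sum : ∑' x : Fin d → ℤ, p x = 1)
    (σ : ℝ → ℝ) (Lipσ : ℝ)
    (hLip : ∀ x y : ℝ, |σ x - σ y| ≤ Lipσ * |x - y|)
    (hσ0 : σ 0 = 0)
    (ξ : ℕ → (Fin d → ℤ) → ℝ)
    (Cξ : ℝ) (hCξ : ∀ n x, |ξ n x| ≤ Cξ)
    (hcomp : Cξ * Lipσ ≤ p 0)
    (u₀ : (Fin d → ℤ) → ℝ) (hu₀_bdd : ∃ B : ℝ, ∀ x, |u₀ x| ≤ B)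
    (h₀ : ∀ x, 0 ≤ u₀ x)
    (u : ℕ → (Fin d → ℤ) → ℝ)
    (hu_init : ∀ x, u 0 x = u₀ x)
    (hu_rec : ∀ n x, u (n + 1) x = transOp p (u n) x + σ (u n x) * ξ n x) :
    ∀ n x, 0 ≤ u n x := by
  have hbdd : ∀ n, ∃ B, ∀ x, |u n x| ≤ B := by
    intro n
    induction n with
    | zero => simpa only [hu_init] using hu₀_bdd
    | succ n ih =>
      obtain ⟨B, hB⟩ := ih
      refine ⟨B + Lipσ * B * Cξ, fun x => ?_⟩
      rw [hu_rec]
      exact abs_heatStep_le hp_nonneg hp_sum hLip hσ0 (hCξ n) hB x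
  intro n
  induction n with
  | zero => simpa only [hu_init] using h₀
  | succ n ih =>
    intro x
    obtain ⟨B, hB⟩ := hbdd n
    rw [hu_rec]
    exact heatStep_nonneg hp_nonneg hp_sum hLip hσ0 (hCξ n) hcomp hB ih x

/-- **Corollary 3.6 (positivity principle).**  If `sup_{n,x}|ξ_n(x)| ≤ C_ξ`,
`p(0) ≥ C_ξ·Lip_σ` and `σ(0) = 0`, then nonnegative initial data produce a
nonnegative solution of the discrete heat equation. -/
theorem discrete_heat_positivity
    {d : ℕ} (hd : 1 ≤ d)
    (p : (Fin d → ℤ) → ℝ) (hp_nonneg : ∀ x, 0 ≤ p x) (hp_le : ∀ x, p x ≤ 1)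
    (hp_sum : ∑' x : Fin d → ℤ, p x = 1)
    (σ : ℝ → ℝ) (Lipσ : ℝ)
    (hLip : ∀ x y : ℝ, |σ x - σ y| ≤ Lipσ * |x - y|)
    (hσ0 : σ 0 = 0)
    (ξ : ℕ → (Fin d → ℤ) → ℝ)
    (Cξ : ℝ) (hCξ : ∀ n x, |ξ n x| ≤ Cξ)
    (hcomp : Cξ * Lipσ ≤ p 0)
    (u₀ : (Fin d → ℤ) → ℝ) (hu₀_bdd : ∃ B : ℝ, ∀ x, |u₀ x| ≤ B)
    (h₀ : ∀ x, 0 ≤ u₀ x)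
    (u : ℕ → (Fin d → ℤ) → ℝ)
    (hu_init : ∀ x, u 0 x = u₀ x)
    (hu_rec : ∀ n x, u (n + 1) x = transOp p (u n) x + σ (u n x) * ξ n x) :
    ∀ n x, 0 ≤ u n x :=
  discrete_heat_positivity_general p hp_nonneg hp_sum σ Lipσ hLip hσ0 ξ Cξ hCξ hcomp u₀ hu₀_bdd h₀ u
    hu_init hu_rec
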